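/- arXiv:1111.6796 — 2 statements merged into one kernel-verified Lean document; each statement's English description precedes it below -/
import Mathlib

section
/- (Langlands decomposition of the stabilizer of ∞.) Let G ∈ U(3,1) be a 4×4 complex matrix with G₄₁ = 0. Then there exist λ ∈ ℂ with |λ| = 1, a real number r > 0, τ = (τ₁, τ₂) ∈ ℂ², t ∈ ℝ, and a 2×2 complex matrix U with U*U = I₂, such that G = λ · N_(τ,t) · A_r · M_U. -/
/-!
Read `Gᴴ J G = J` entry by entry. With `G₄₁ = 0` the `(1,1)` entry says `|G₂₁|² + |G₃₁|² = 0`,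
so `G` fixes the isotropic line `ℂ e₁`; the `(1,j)` entries then make the last row
`(0, 0, 0, 1 / conj G₁₁)`. Dividing `G` by the phase of `G₁₁` we may take `G₁₁ = r > 0`.
The middle `2 × 2` block is then unitary and the last column gives `τ / r`; the `(4,2)`, `(4,3)`
entries determine the rest of the first row, and the `(4,4)` entry forces
`2 r Re G₁₄ = -(|τ₁|² + |τ₂|²)`, which is exactly the real part of the Heisenberg entry of `N`.
-/

open Matrix Complex

/-- ω = (−1 + i√3)/2, a primitive cube root of unity. -/
noncomputable def ω : ℂ := (-1 + Complex.I * Real.sqrt 3) / 2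

/-- The Eisenstein integers Z[ω], as a subset of ℂ. -/
def Zω : Set ℂ := {z : ℂ | ∃ a b : ℤ, z = (a : ℂ) + (b : ℂ) * ω}

/-- The Hermitian form matrix J. -/
def Jm : Matrix (Fin 4) (Fin 4) ℂ := !![0,0,0,1; 0,1,0,0; 0,0,1,0; 1,0,0,0]

/-- Heisenberg translation N_(τ,t). -/
noncomputable def N (τ₁ τ₂ : ℂ) (t : ℝ) : Matrix (Fin 4) (Fin 4) ℂ :=
  !![1, -(starRingEnd ℂ) τ₁, -(starRingEnd ℂ) τ₂,
       (-((Complex.normSq τ₁ : ℂ) + (Complex.normSq τ₂ : ℂ)) + Complex.I * (t : ℝ)) / 2;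
     0, 1, 0, τ₁;
     0, 0, 1, τ₂;
     0, 0, 0, 1]

/-- Heisenberg rotation M_U = diag(1, U, 1). -/
def M (U : Matrix (Fin 2) (Fin 2) ℂ) : Matrix (Fin 4) (Fin 4) ℂ :=
  !![1, 0, 0, 0;
     0, U 0 0, U 0 1, 0;
     0, U 1 0, U 1 1, 0;
     0, 0, 0, 1]

/-- Heisenberg dilation A_r = diag(r, 1, 1, 1/r). -/
noncomputable def Ad (r : ℝ) : Matrix (Fin 4) (Fin 4) ℂ :=
  !![(r : ℂ), 0, 0, 0; 0, 1, 0, 0; 0, 0, 1, 0; 0, 0, 0, (r : ℂ)⁻¹]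

noncomputable def U₁ : Matrix (Fin 2) (Fin 2) ℂ := !![0, 1; 1, 0]
noncomputable def U₂ : Matrix (Fin 2) (Fin 2) ℂ := !![-ω, 0; 0, 1]

/-- The Heisenberg translation N₁ = N_((1,0)ᵀ, √3). -/
noncomputable def N₁ : Matrix (Fin 4) (Fin 4) ℂ := N 1 0 (Real.sqrt 3)

/-- The involution R. -/
def Rmat : Matrix (Fin 4) (Fin 4) ℂ := !![0,0,0,1; 0,-1,0,0; 0,0,-1,0; 1,0,0,0]

/-- The generators {N₁, M_{U₁}, M_{U₂}} of the stabilizer of ∞, as a subset of GL(4,ℂ). -/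
noncomputable def gens3 : Set (GL (Fin 4) ℂ) :=
  {g | (g : Matrix (Fin 4) (Fin 4) ℂ) = N₁ ∨ (g : Matrix (Fin 4) (Fin 4) ℂ) = M U₁ ∨
       (g : Matrix (Fin 4) (Fin 4) ℂ) = M U₂}

/-- The generators {U₁, U₂}, as a subset of GL(2,ℂ). -/
noncomputable def gens2 : Set (GL (Fin 2) ℂ) :=
  {g | (g : Matrix (Fin 2) (Fin 2) ℂ) = U₁ ∨ (g : Matrix (Fin 2) (Fin 2) ℂ) = U₂}

/-- The generators {N₁, M_{U₁}, M_{U₂}, R}, as a subset of GL(4,ℂ). -/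
noncomputable def gens4 : Set (GL (Fin 4) ℂ) :=
  {g | (g : Matrix (Fin 4) (Fin 4) ℂ) = N₁ ∨ (g : Matrix (Fin 4) (Fin 4) ℂ) = M U₁ ∨
       (g : Matrix (Fin 4) (Fin 4) ℂ) = M U₂ ∨ (g : Matrix (Fin 4) (Fin 4) ℂ) = Rmat}

open ComplexConjugate ComplexOrder

theorem N_mul_Ad_mul_M (τ₁ τ₂ : ℂ) (t r : ℝ) (U : Matrix (Fin 2) (Fin 2) ℂ) :
    N τ₁ τ₂ t * Ad r * M U =
    !![(r : ℂ), -(conj τ₁ * U 0 0 + conj τ₂ * U 1 0), -(conj τ₁ * U 0 1 + conj τ₂ * U 1 1),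
         (-(normSq τ₁ + normSq τ₂ : ℂ) + I * t) / 2 * (r : ℂ)⁻¹;
       0, U 0 0, U 0 1, τ₁ * (r : ℂ)⁻¹;
       0, U 1 0, U 1 1, τ₂ * (r : ℂ)⁻¹;
       0, 0, 0, (r : ℂ)⁻¹] := by
  ext i j
  fin_cases i <;> fin_cases j <;> simp [N, Ad, M, mul_apply, Fin.sum_univ_four] <;> ring

theorem conjTranspose_mul_Jm_mul_apply (G : Matrix (Fin 4) (Fin 4) ℂ) (i j : Fin 4) :
    (Gᴴ * Jm * G) i j =
      conj (G 0 i) * G 3 j + conj (G 1 i) * G 1 j + conj (G 2 i) * G 2 j +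
        conj (G 3 i) * G 0 j := by
  simp [Jm, mul_apply, Fin.sum_univ_four]
  ring

def middleBlock (G : Matrix (Fin 4) (Fin 4) ℂ) : Matrix (Fin 2) (Fin 2) ℂ :=
  !![G 1 1, G 1 2; G 2 1, G 2 2]

section Unitary31

variable {G : Matrix (Fin 4) (Fin 4) ℂ}

theorem Jm_apply_eq_of_unitary (hG : Gᴴ * Jm * G = Jm) (i j : Fin 4) :
    conj (G 0 i) * G 3 j + conj (G 1 i) * G 1 j + conj (G 2 i) * G 2 j + conj (G 3 i) * G 0 j =
      Jm i j := by
  rw [← conjTranspose_mul_Jm_mul_apply, hG]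

theorem apply_one_zero_eq_zero_and_apply_two_zero_eq_zero (hG : Gᴴ * Jm * G = Jm)
    (h30 : G 3 0 = 0) : G 1 0 = 0 ∧ G 2 0 = 0 := by
  have h : star (G 1 0) * G 1 0 + star (G 2 0) * G 2 0 = 0 := by
    simpa [h30, Jm] using Jm_apply_eq_of_unitary hG 0 0
  rw [← CStarRing.star_mul_self_eq_zero_iff (G 1 0),
    ← CStarRing.star_mul_self_eq_zero_iff (G 2 0)]
  exact (add_eq_zero_iff_of_nonneg (star_mul_self_nonneg _) (star_mul_self_nonneg _)).1 h

theorem conj_apply_zero_zero_mul_apply_three_three (hG : Gᴴ * Jm * G = Jm) (h30 : G 3 0 = 0) :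
    conj (G 0 0) * G 3 3 = 1 := by
  obtain ⟨h10, h20⟩ := apply_one_zero_eq_zero_and_apply_two_zero_eq_zero hG h30
  simpa [h10, h20, h30, Jm] using Jm_apply_eq_of_unitary hG 0 3

theorem apply_three_one_eq_zero_and_apply_three_two_eq_zero (hG : Gᴴ * Jm * G = Jm)
    (h30 : G 3 0 = 0) : G 3 1 = 0 ∧ G 3 2 = 0 := by
  obtain ⟨h10, h20⟩ := apply_one_zero_eq_zero_and_apply_two_zero_eq_zero hG h30
  have h00 : conj (G 0 0) ≠ 0 :=
    left_ne_zero_of_mul_eq_one (conj_apply_zero_zero_mul_apply_three_three hG h30)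
  have h01 := Jm_apply_eq_of_unitary hG 0 1
  have h02 := Jm_apply_eq_of_unitary hG 0 2
  simp only [h10, h20, h30, map_zero, zero_mul, add_zero] at h01 h02
  exact ⟨(mul_eq_zero.1 (by simpa [Jm] using h01)).resolve_left h00,
    (mul_eq_zero.1 (by simpa [Jm] using h02)).resolve_left h00⟩

theorem middleBlock_conjTranspose_mul_self (hG : Gᴴ * Jm * G = Jm)
    (h31 : G 3 1 = 0) (h32 : G 3 2 = 0) : (middleBlock G)ᴴ * middleBlock G = 1 := by
  ext i j
  have h := Jm_apply_eq_of_unitary hG i.succ.castSucc j.succ.castSucc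
  fin_cases i <;> fin_cases j <;>
    simpa [middleBlock, mul_apply, Fin.sum_univ_two, h31, h32, Jm] using h

theorem exists_eq_N_mul_Ad_mul_M (hG : Gᴴ * Jm * G = Jm) (h30 : G 3 0 = 0) {r : ℝ} (hr : 0 < r)
    (h00 : G 0 0 = r) :
    ∃ (t : ℝ) (τ₁ τ₂ : ℂ) (U : Matrix (Fin 2) (Fin 2) ℂ),
      Uᴴ * U = 1 ∧ G = N τ₁ τ₂ t * Ad r * M U := by
  obtain ⟨h10, h20⟩ := apply_one_zero_eq_zero_and_apply_two_zero_eq_zero hG h30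
  obtain ⟨h31, h32⟩ := apply_three_one_eq_zero_and_apply_three_two_eq_zero hG h30
  have hr' : (r : ℂ) ≠ 0 := by exact_mod_cast hr.ne'
  have h33 : G 3 3 = (r : ℂ)⁻¹ := by
    have := conj_apply_zero_zero_mul_apply_three_three hG h30
    rw [h00, conj_ofReal] at this
    exact eq_inv_of_mul_eq_one_right this
  have hrr : (r : ℂ) * (r : ℂ)⁻¹ = 1 := mul_inv_cancel₀ hr'
  have h3 := fun j => Jm_apply_eq_of_unitary hG 3 j
  refine ⟨2 * r * (G 0 3).im, G 1 3 * r, G 2 3 * r, middleBlock G,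
    middleBlock_conjTranspose_mul_self hG h31 h32, ?_⟩
  rw [N_mul_Ad_mul_M]
  ext i j
  fin_cases i <;> fin_cases j <;> simp [middleBlock, h00, h10, h20, h30, h31, h32, h33, hr']
  · have h := h3 1
    simp [h31, h33, Jm] at h
    linear_combination r * h - G 0 1 * hrr
  · have h := h3 2
    simp [h32, h33, Jm] at h
    linear_combination r * h - G 0 2 * hrr
  · have h := h3 3
    simp [h33, Jm] at h
    rw [normSq_eq_conj_mul_self, normSq_eq_conj_mul_self, im_eq_sub_conj]
    field_simp
    linear_combination r * h - (G 0 3 + conj (G 0 3)) * hrr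

end Unitary31

theorem conjTranspose_smul_mul_mul_smul_of_norm_eq_one {n : Type*} [Fintype n]
    (J A : Matrix n n ℂ) {c : ℂ} (hc : ‖c‖ = 1) :
    (c • A)ᴴ * J * (c • A) = Aᴴ * J * A := by
  rw [conjTranspose_smul, smul_mul_assoc, smul_mul_assoc, mul_smul_comm, smul_smul,
    star_def, conj_mul', hc, ofReal_one, one_pow, one_smul]

/-- Langlands decomposition: any G ∈ U(3,1) with G₄₁ = 0 is a unit scalar multiple of
N_(τ,t) · A_r · M_U. -/
theorem stmt2 (G : Matrix (Fin 4) (Fin 4) ℂ) (hG : Gᴴ * Jm * G = Jm) (h41 : G 3 0 = 0) :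
    ∃ (lam : ℂ) (r t : ℝ) (τ₁ τ₂ : ℂ) (U : Matrix (Fin 2) (Fin 2) ℂ),
      ‖lam‖ = 1 ∧ 0 < r ∧ Uᴴ * U = 1 ∧
      G = lam • (N τ₁ τ₂ t * Ad r * M U) := by
  have h00 : G 0 0 ≠ 0 := by
    simpa using left_ne_zero_of_mul_eq_one (conj_apply_zero_zero_mul_apply_three_three hG h41)
  set r := ‖G 0 0‖ with hr_def
  have hr : 0 < r := norm_pos_iff.2 h00
  set lam := G 0 0 / r
  have hlam : ‖lam‖ = 1 := by
    rw [norm_div, norm_real, Real.norm_of_nonneg hr.le, div_self hr.ne']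
  have hconj : ‖conj lam‖ = 1 := by rwa [norm_conj]
  have hH00 : (conj lam • G) 0 0 = r := by
    rw [Matrix.smul_apply, smul_eq_mul, map_div₀, conj_ofReal, div_mul_eq_mul_div,
      conj_mul', ← hr_def]
    field_simp
  obtain ⟨t, τ₁, τ₂, U, hU, hH⟩ := exists_eq_N_mul_Ad_mul_M
    (by rwa [conjTranspose_smul_mul_mul_smul_of_norm_eq_one _ _ hconj]) (by simp [h41]) hr hH00
  refine ⟨lam, r, t, τ₁, τ₂, U, hlam, hr, hU, ?_⟩
  rw [← hH, smul_smul, mul_conj', hlam, ofReal_one, one_pow, one_smul]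
end

section
/- The group U(2;Z[ω]) of 2×2 unitary matrices with Eisenstein integer entries is generated by the two matrices U₁ = [[0,1],[1,0]] and U₂ = [[−ω,0],[0,1]]; that is, U(2;Z[ω]) equals the subgroup of GL(2,ℂ) generated by {U₁, U₂}. -/
open Matrix Complex

/-!
The norm of `a + bω` is `a² - ab + b²`, so every entry of a unitary matrix over `Z[ω]` has
natural-number norm. The norms in each row and each column sum to `1`, so such a matrix is
diagonal or antidiagonal with unit entries, and the units of `Z[ω]` are the six powers of `-ω`.
These matrices are all generated: `U₂ ^ k = diag((-ω) ^ k, 1)`, conjugation by `U₁` swaps the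
diagonal entries and left multiplication by `U₁` swaps the rows. Conversely, unitary matrices
with entries in a conjugation-closed subring of `ℂ` form a group.
-/

open ComplexConjugate

lemma ω_sq_add_ω_add_one : ω ^ 2 + ω + 1 = 0 := by
  have h3 : ((Real.sqrt 3 : ℝ) : ℂ) ^ 2 = 3 := by
    rw [← Complex.ofReal_pow, Real.sq_sqrt (by norm_num : (0 : ℝ) ≤ 3)]; norm_num
  unfold ω
  linear_combination (((Real.sqrt 3 : ℝ) : ℂ) ^ 2 / 4) * Complex.I_sq - (1 / 4) * h3

lemma ω_ne_zero : ω ≠ 0 := by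
  intro h
  simpa [h] using ω_sq_add_ω_add_one

lemma conj_ω : conj ω = -1 - ω := by
  unfold ω
  simp [map_ofNat]
  ring

lemma conj_ω_mul_ω : conj ω * ω = 1 := by
  rw [conj_ω]
  linear_combination -ω_sq_add_ω_add_one

lemma normSq_intCast_add_intCast_mul_ω (a b : ℤ) :
    normSq ((a : ℂ) + (b : ℂ) * ω) = ((a ^ 2 - a * b + b ^ 2 : ℤ) : ℝ) := by
  apply Complex.ofReal_injective
  rw [Complex.normSq_eq_conj_mul_self, map_add, map_mul, map_intCast, map_intCast, conj_ω]
  push_cast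
  linear_combination (-(b : ℂ) ^ 2) * ω_sq_add_ω_add_one

def eisensteinIntegers : Subring ℂ where
  carrier := Zω
  zero_mem' := ⟨0, 0, by simp⟩
  one_mem' := ⟨1, 0, by simp⟩
  add_mem' := by
    rintro _ _ ⟨a, b, rfl⟩ ⟨c, d, rfl⟩
    exact ⟨a + c, b + d, by push_cast; ring⟩
  neg_mem' := by
    rintro _ ⟨a, b, rfl⟩
    exact ⟨-a, -b, by push_cast; ring⟩
  mul_mem' := by
    rintro _ _ ⟨a, b, rfl⟩ ⟨c, d, rfl⟩
    refine ⟨a * c - b * d, a * d + b * c - b * d, ?_⟩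
    push_cast
    linear_combination ((b : ℂ) * d) * ω_sq_add_ω_add_one

lemma ω_mem_eisensteinIntegers : ω ∈ eisensteinIntegers := ⟨0, 1, by simp⟩

lemma star_mem_eisensteinIntegers {z : ℂ} (hz : z ∈ eisensteinIntegers) :
    star z ∈ eisensteinIntegers := by
  obtain ⟨a, b, rfl⟩ := hz
  refine ⟨a - b, -b, ?_⟩
  rw [Complex.star_def, map_add, map_mul, map_intCast, map_intCast, conj_ω]
  push_cast; ring

lemma exists_normSq_eq_natCast {z : ℂ} (hz : z ∈ Zω) : ∃ m : ℕ, normSq z = m := by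
  obtain ⟨a, b, rfl⟩ := hz
  refine ⟨(a ^ 2 - a * b + b ^ 2).toNat, ?_⟩
  rw [normSq_intCast_add_intCast_mul_ω, ← Int.cast_natCast,
    Int.toNat_of_nonneg (by nlinarith [sq_nonneg (a - b), sq_nonneg a, sq_nonneg b])]

lemma exists_eq_neg_ω_pow_of_normSq_eq_one {z : ℂ} (hz : z ∈ Zω) (h : normSq z = 1) :
    ∃ k : ℕ, z = (-ω) ^ k := by
  obtain ⟨a, b, rfl⟩ := hz
  have hab : a ^ 2 - a * b + b ^ 2 = 1 := by
    rw [normSq_intCast_add_intCast_mul_ω] at h; exact_mod_cast h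
  obtain ⟨ha₁, ha₂⟩ : -1 ≤ a ∧ a ≤ 1 := by constructor <;> nlinarith [sq_nonneg (a - 2 * b)]
  obtain ⟨hb₁, hb₂⟩ : -1 ≤ b ∧ b ≤ 1 := by constructor <;> nlinarith [sq_nonneg (2 * a - b)]
  have hω := ω_sq_add_ω_add_one
  interval_cases a <;> interval_cases b <;> norm_num at hab
  · exact ⟨2, by push_cast; linear_combination -hω⟩
  · exact ⟨3, by push_cast; linear_combination (ω - 1) * hω⟩
  · exact ⟨1, by push_cast; ring⟩
  · exact ⟨4, by push_cast; linear_combination (-ω * (ω - 1)) * hω⟩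
  · exact ⟨0, by push_cast; ring⟩
  · exact ⟨5, by push_cast; linear_combination (1 + ω ^ 2 * (ω - 1)) * hω⟩

section UnitaryOver

variable {n α : Type*} [Fintype n] [DecidableEq n] [CommRing α] [StarRing α]

/-- `U(n; S)`; the inverse of a unitary matrix is its conjugate transpose, hence `hS`. -/
def unitaryGroupOver (S : Subring α) (hS : ∀ x ∈ S, star x ∈ S) : Subgroup (GL n α) where
  carrier := {g | (g : Matrix n n α) ∈ unitaryGroup n α ∧ ∀ i j, (g : Matrix n n α) i j ∈ S}
  one_mem' := ⟨one_mem _, fun i j => by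
    rw [Units.val_one, one_apply]; split_ifs <;> simp [one_mem, zero_mem]⟩
  mul_mem' := by
    rintro a b ⟨ha, ha'⟩ ⟨hb, hb'⟩
    exact ⟨mul_mem ha hb, fun i j => by
      rw [Units.val_mul, mul_apply]
      exact sum_mem fun k _ => mul_mem (ha' i k) (hb' k j)⟩
  inv_mem' := by
    rintro g ⟨hg, hg'⟩
    have hinv : ((g⁻¹ : GL n α) : Matrix n n α) = star (g : Matrix n n α) :=
      Units.inv_eq_of_mul_eq_one_left (mem_unitaryGroup_iff'.1 hg)
    refine ⟨hinv ▸ Unitary.star_mem hg, fun i j => ?_⟩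
    rw [hinv]
    exact hS _ (hg' j i)

end UnitaryOver

section UnitaryNormSq

variable {n : Type*} [Fintype n] [DecidableEq n] {A : Matrix n n ℂ}

lemma sum_normSq_apply_col (hA : A ∈ unitaryGroup n ℂ) (j : n) : ∑ i, normSq (A i j) = 1 := by
  have h := congrFun (congrFun (mem_unitaryGroup_iff'.1 hA) j) j
  simp only [mul_apply, star_apply, one_apply_eq, Complex.star_def] at h
  exact_mod_cast (by simpa [Complex.normSq_eq_conj_mul_self] using h :
    ((∑ i, normSq (A i j) : ℝ) : ℂ) = 1)

lemma sum_normSq_apply_row (hA : A ∈ unitaryGroup n ℂ) (i : n) : ∑ j, normSq (A i j) = 1 := by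
  simpa using sum_normSq_apply_col (transpose_mem_unitaryGroup_iff.2 hA) i

end UnitaryNormSq

lemma eq_diagonal_or_antidiagonal_of_mem_unitaryGroup {A : Matrix (Fin 2) (Fin 2) ℂ}
    (hA : A ∈ unitaryGroup (Fin 2) ℂ) (hnat : ∀ i j, ∃ m : ℕ, normSq (A i j) = m) :
    (A 0 1 = 0 ∧ A 1 0 = 0 ∧ normSq (A 0 0) = 1 ∧ normSq (A 1 1) = 1) ∨
      (A 0 0 = 0 ∧ A 1 1 = 0 ∧ normSq (A 0 1) = 1 ∧ normSq (A 1 0) = 1) := by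
  obtain ⟨a, ha⟩ := hnat 0 0
  obtain ⟨b, hb⟩ := hnat 0 1
  obtain ⟨c, hc⟩ := hnat 1 0
  obtain ⟨d, hd⟩ := hnat 1 1
  have hac : a + c = 1 := by
    have := sum_normSq_apply_col hA 0
    rw [Fin.sum_univ_two, ha, hc] at this; exact_mod_cast this
  have hab : a + b = 1 := by
    have := sum_normSq_apply_row hA 0
    rw [Fin.sum_univ_two, ha, hb] at this; exact_mod_cast this
  have hbd : b + d = 1 := by
    have := sum_normSq_apply_col hA 1
    rw [Fin.sum_univ_two, hb, hd] at this; exact_mod_cast this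
  simp only [← normSq_eq_zero, ha, hb, hc, hd]
  norm_cast
  omega

noncomputable def unitU₁ : GL (Fin 2) ℂ :=
  GeneralLinearGroup.mkOfDetNeZero U₁ (by simp [U₁, det_fin_two])

noncomputable def unitU₂ : GL (Fin 2) ℂ :=
  GeneralLinearGroup.mkOfDetNeZero U₂ (by simp [U₂, det_fin_two, ω_ne_zero])

lemma unitU₁_mem_closure : unitU₁ ∈ Subgroup.closure gens2 :=
  Subgroup.subset_closure (Or.inl rfl)

lemma unitU₂_mem_closure : unitU₂ ∈ Subgroup.closure gens2 :=
  Subgroup.subset_closure (Or.inr rfl)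

lemma U₂_pow (k : ℕ) : U₂ ^ k = !![(-ω) ^ k, 0; 0, 1] := by
  induction k with
  | zero => simp [one_fin_two]
  | succ k ih => rw [pow_succ, ih]; simp [U₂, pow_succ]

lemma U₁_mul_diagonal (x y : ℂ) : U₁ * !![x, 0; 0, y] = !![0, y; x, 0] := by
  simp [U₁]

lemma exists_mem_closure_diagonal (k l : ℕ) :
    ∃ g ∈ Subgroup.closure gens2,
      (g : Matrix (Fin 2) (Fin 2) ℂ) = !![(-ω) ^ k, 0; 0, (-ω) ^ l] := by
  refine ⟨unitU₂ ^ k * (unitU₁ * unitU₂ ^ l * unitU₁), ?_, ?_⟩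
  · exact mul_mem (pow_mem unitU₂_mem_closure k)
      (mul_mem (mul_mem unitU₁_mem_closure (pow_mem unitU₂_mem_closure l)) unitU₁_mem_closure)
  · simp [Units.val_pow_eq_pow_val, unitU₁, unitU₂, U₂_pow, U₁]

lemma exists_mem_closure_antidiagonal (k l : ℕ) :
    ∃ g ∈ Subgroup.closure gens2,
      (g : Matrix (Fin 2) (Fin 2) ℂ) = !![0, (-ω) ^ k; (-ω) ^ l, 0] := by
  obtain ⟨g, hg, hgA⟩ := exists_mem_closure_diagonal l k
  exact ⟨unitU₁ * g, mul_mem unitU₁_mem_closure hg, by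
    rw [Units.val_mul, hgA, ← U₁_mul_diagonal]; rfl⟩

lemma closure_gens2_le_unitaryGroupOver :
    Subgroup.closure gens2 ≤
      unitaryGroupOver eisensteinIntegers fun _ => star_mem_eisensteinIntegers := by
  rw [Subgroup.closure_le]
  rintro g (hg | hg) <;> refine ⟨mem_unitaryGroup_iff'.2 ?_, fun i j => ?_⟩ <;> rw [hg]
  · ext i j
    fin_cases i <;> fin_cases j <;> simp [U₁, mul_apply]
  · fin_cases i <;> fin_cases j <;> simp [U₁, one_mem, zero_mem]
  · ext i j
    fin_cases i <;> fin_cases j <;> simp [U₂, mul_apply, conj_ω_mul_ω]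
  · fin_cases i <;> fin_cases j <;> simp [U₂, one_mem, zero_mem, ω_mem_eisensteinIntegers]

/-- U(2; Z[ω]) is generated by U₁ and U₂. -/
theorem stmt4 (A : Matrix (Fin 2) (Fin 2) ℂ) :
    (Aᴴ * A = 1 ∧ ∀ i j, A i j ∈ Zω) ↔
      ∃ g ∈ Subgroup.closure gens2, (g : Matrix (Fin 2) (Fin 2) ℂ) = A := by
  constructor
  · rintro ⟨hA, hZ⟩
    have hU : A ∈ unitaryGroup (Fin 2) ℂ := mem_unitaryGroup_iff'.2 hA
    have unit {i j} (h : normSq (A i j) = 1) := exists_eq_neg_ω_pow_of_normSq_eq_one (hZ i j) h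
    rcases eq_diagonal_or_antidiagonal_of_mem_unitaryGroup hU
      (fun i j => exists_normSq_eq_natCast (hZ i j)) with
      ⟨h01, h10, h00, h11⟩ | ⟨h00, h11, h01, h10⟩
    · obtain ⟨k, hk⟩ := unit h00
      obtain ⟨l, hl⟩ := unit h11
      rw [eta_fin_two A, h01, h10, hk, hl]
      exact exists_mem_closure_diagonal k l
    · obtain ⟨k, hk⟩ := unit h01
      obtain ⟨l, hl⟩ := unit h10
      rw [eta_fin_two A, h00, h11, hk, hl]
      exact exists_mem_closure_antidiagonal k l
  · rintro ⟨g, hg, rfl⟩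
    obtain ⟨hU, hZ⟩ := closure_gens2_le_unitaryGroupOver hg
    exact ⟨mem_unitaryGroup_iff'.1 hU, hZ⟩
end
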